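/- For a point P = (p, 0, q) with p > 0 in the plane y = 0, any nearest point Q on the spheroid surface to P also lies in the half-plane {y = 0, x ≥ 0}; consequently the geographic longitude of the projected centroid equals the longitude of the centroid itself. -/
import Mathlib


open Real
set_option maxHeartbeats 800000

/-- For `P = (p, 0, q)` with `p > 0`, any nearest point `Q` of the spheroid surface to `P`
lies in the half-plane `{y = 0, x ≥ 0}`; hence the longitude of the projected centroid
equals that of the centroid itself. -/
theorem nearest_point_same_longitude (a b p q : ℝ) (ha : 0 < a) (hb : 0 < b) (hp : 0 < p)
    (P : EuclideanSpace ℝ (Fin 3)) (hP0 : P 0 = p) (hP1 : P 1 = 0) (hP2 : P 2 = q)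
    (Q : EuclideanSpace ℝ (Fin 3))
    (hQ : (Q 0) ^ 2 / a ^ 2 + (Q 1) ^ 2 / a ^ 2 + (Q 2) ^ 2 / b ^ 2 = 1)
    (hmin : ∀ Q' : EuclideanSpace ℝ (Fin 3),
      (Q' 0) ^ 2 / a ^ 2 + (Q' 1) ^ 2 / a ^ 2 + (Q' 2) ^ 2 / b ^ 2 = 1 →
      ‖P - Q‖ ≤ ‖P - Q'‖) :
    Q 1 = 0 ∧ 0 ≤ Q 0 := by
  set r : ℝ := Real.sqrt ((Q 0) ^ 2 + (Q 1) ^ 2) with hr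
  have hr0 : 0 ≤ r := Real.sqrt_nonneg _
  have hr2 : r ^ 2 = (Q 0) ^ 2 + (Q 1) ^ 2 := by
    rw [hr, sq_sqrt (by positivity)]
  have hQ0r : Q 0 ≤ r := by
    nlinarith [sq_nonneg (Q 1), sq_nonneg (r - Q 0), sq_nonneg (r + Q 0)]
  set Q' : EuclideanSpace ℝ (Fin 3) := (WithLp.equiv 2 (Fin 3 → ℝ)).symm ![r, 0, Q 2] with hQ'
  have hQ'0 : Q' 0 = r := rfl
  have hQ'1 : Q' 1 = 0 := rfl
  have hQ'2 : Q' 2 = Q 2 := rfl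
  have hmem : (Q' 0) ^ 2 / a ^ 2 + (Q' 1) ^ 2 / a ^ 2 + (Q' 2) ^ 2 / b ^ 2 = 1 := by
    rw [hQ'0, hQ'1, hQ'2, hr2]
    field_simp
    field_simp at hQ
    linarith
  have hle := hmin Q' hmem
  have hnorm : ∀ v : EuclideanSpace ℝ (Fin 3),
      ‖v‖ ^ 2 = (v 0) ^ 2 + (v 1) ^ 2 + (v 2) ^ 2 := by
    intro v
    rw [EuclideanSpace.norm_eq, sq_sqrt (by positivity), Fin.sum_univ_three]
    simp [sq_abs]
  have hsq : ‖P - Q‖ ^ 2 ≤ ‖P - Q'‖ ^ 2 := by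
    have := norm_nonneg (P - Q')
    nlinarith [norm_nonneg (P - Q)]
  rw [hnorm, hnorm] at hsq
  have e0 : (P - Q) 0 = p - Q 0 := by simp [hP0]
  have e1 : (P - Q) 1 = 0 - Q 1 := by simp [hP1]
  have e2 : (P - Q) 2 = q - Q 2 := by simp [hP2]
  have f0 : (P - Q') 0 = p - r := by simp [hP0, hQ'0]
  have f1 : (P - Q') 1 = 0 := by simp [hP1, hQ'1]
  have f2 : (P - Q') 2 = q - Q 2 := by simp [hP2, hQ'2]
  rw [e0, e1, e2, f0, f1, f2] at hsq
  -- hsq : (p - Q 0)^2 + Q1^2 + ... ≤ (p - r)^2 + 0 + ...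
  clear hmin hle hnorm hmem hQ
  have h2 : r ≤ Q 0 := by nlinarith [hsq, hr2, hp]
  have key : r = Q 0 := le_antisymm h2 hQ0r
  constructor
  · nlinarith
  · rw [← key]; exact hr0
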